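/- For smooth divergence-free u : ℝ³ → ℝ³, let τ be the LANS-α stress tensor τ_{ij} = u_{i,m} u_{j,m} + u_{i,m} u_{m,j} − u_{m,i} u_{m,j} (with indices as in τ = ∇u·∇u + ∇u·∇uᵀ − ∇uᵀ·∇u), let p be a scalar function and let v = (1−α²Δ)u; then (1−α²Δ)(∂_t u_i + u_j ∂_j u_i) + ∂_i p + α² ∂_j τ_{ij} = ∂_t v_i + u_j ∂_j v_i + v_j ∂_i u_j + ∂_i(p − ½|u|² − (α²/2)|∇u|²). -/

import Mathlib

/-- Partial derivative in the `j`-th coordinate direction. -/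
noncomputable def pd (f : EuclideanSpace ℝ (Fin 3) → ℝ) (j : Fin 3)
    (x : EuclideanSpace ℝ (Fin 3)) : ℝ :=
  fderiv ℝ f x (EuclideanSpace.single j 1)

/-- Componentwise Euclidean Laplacian. -/
noncomputable def lap (f : EuclideanSpace ℝ (Fin 3) → ℝ)
    (x : EuclideanSpace ℝ (Fin 3)) : ℝ :=
  ∑ j, pd (pd f j) j x

noncomputable section

namespace LANS

variable {H : Type*} [NormedAddCommGroup H] [NormedSpace ℝ H]

/-- Directional derivative. -/
noncomputable def pdv (w : H) (f : H → ℝ) (x : H) : ℝ := fderiv ℝ f x w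

lemma contDiff_pdv {f : H → ℝ} (hf : ContDiff ℝ (⊤ : ℕ∞) f) (w : H) : ContDiff ℝ (⊤ : ℕ∞) (pdv w f) :=
  (hf.fderiv_right (le_refl _)).clm_apply contDiff_const

lemma pdv_comm {f : H → ℝ} (hf : ContDiff ℝ (⊤ : ℕ∞) f) (v w : H) (x : H) :
    pdv v (pdv w f) x = pdv w (pdv v f) x := by
  have hd : ∀ y, HasFDerivAt f (fderiv ℝ f y) y := fun y =>
    (hf.differentiable (by simp) y).hasFDerivAt
  have h2 : HasFDerivAt (fderiv ℝ f) (fderiv ℝ (fderiv ℝ f) x) x :=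
    (((hf.fderiv_right (m := (⊤ : ℕ∞)) (by simp)).differentiable (by simp)) x).hasFDerivAt
  have ev : ∀ u : H, fderiv ℝ (fun y => fderiv ℝ f y u) x
      = (fderiv ℝ (fderiv ℝ f) x).flip u := by
    intro u
    have := h2.clm_apply (hasFDerivAt_const u x)
    simpa using this.fderiv
  have hsymm := second_derivative_symmetric hd h2 v w
  have e1 : pdv w f = fun y => fderiv ℝ f y w := rfl
  have e2 : pdv v f = fun y => fderiv ℝ f y v := rfl
  simp only [pdv, e1, e2, ev]
  exact hsymm

section arith
variable {f g : H → ℝ} {x w : H}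

lemma pdv_add (hf : DifferentiableAt ℝ f x) (hg : DifferentiableAt ℝ g x) :
    pdv w (fun y => f y + g y) x = pdv w f x + pdv w g x := by
  simp [pdv, fderiv_fun_add hf hg]

lemma pdv_sub (hf : DifferentiableAt ℝ f x) (hg : DifferentiableAt ℝ g x) :
    pdv w (fun y => f y - g y) x = pdv w f x - pdv w g x := by
  simp [pdv, fderiv_fun_sub hf hg]

lemma pdv_mul (hf : DifferentiableAt ℝ f x) (hg : DifferentiableAt ℝ g x) :
    pdv w (fun y => f y * g y) x = pdv w f x * g x + f x * pdv w g x := by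
  simp [pdv, fderiv_fun_mul hf hg]; ring

lemma pdv_const_mul (c : ℝ) (hf : DifferentiableAt ℝ f x) :
    pdv w (fun y => c * f y) x = c * pdv w f x := by
  simp [pdv, fderiv_const_mul hf]

lemma pdv_sq (hf : DifferentiableAt ℝ f x) :
    pdv w (fun y => f y ^ 2) x = 2 * f x * pdv w f x := by
  have : (fun y => f y ^ 2) = fun y => f y * f y := by ext y; ring
  rw [this, pdv_mul hf hf]; ring

lemma pdv_sum {ι : Type*} (s : Finset ι) {F : ι → H → ℝ}
    (hF : ∀ i ∈ s, DifferentiableAt ℝ (F i) x) :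
    pdv w (fun y => ∑ i ∈ s, F i y) x = ∑ i ∈ s, pdv w (F i) x := by
  simp [pdv, fderiv_fun_sum hF]

end arith

section spatial

abbrev E3 := EuclideanSpace ℝ (Fin 3)

variable {f g : E3 → ℝ} {j k : Fin 3} {x : E3}

lemma pd_add (hf : DifferentiableAt ℝ f x) (hg : DifferentiableAt ℝ g x) :
    pd (fun y => f y + g y) j x = pd f j x + pd g j x := pdv_add hf hg

lemma pd_sub (hf : DifferentiableAt ℝ f x) (hg : DifferentiableAt ℝ g x) :
    pd (fun y => f y - g y) j x = pd f j x - pd g j x := pdv_sub hf hg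

lemma pd_mul (hf : DifferentiableAt ℝ f x) (hg : DifferentiableAt ℝ g x) :
    pd (fun y => f y * g y) j x = pd f j x * g x + f x * pd g j x := pdv_mul hf hg

lemma pd_const_mul (c : ℝ) (hf : DifferentiableAt ℝ f x) :
    pd (fun y => c * f y) j x = c * pd f j x := pdv_const_mul c hf

lemma pd_sq (hf : DifferentiableAt ℝ f x) :
    pd (fun y => f y ^ 2) j x = 2 * f x * pd f j x := pdv_sq hf

lemma pd_sum {ι : Type*} (s : Finset ι) {F : ι → E3 → ℝ}
    (hF : ∀ i ∈ s, DifferentiableAt ℝ (F i) x) :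
    pd (fun y => ∑ i ∈ s, F i y) j x = ∑ i ∈ s, pd (F i) j x := pdv_sum s hF

lemma contDiff_pd (hf : ContDiff ℝ (⊤ : ℕ∞) f) (j : Fin 3) : ContDiff ℝ (⊤ : ℕ∞) (pd f j) :=
  contDiff_pdv hf _

lemma pd_comm (hf : ContDiff ℝ (⊤ : ℕ∞) f) (j k : Fin 3) (x : E3) :
    pd (pd f j) k x = pd (pd f k) j x :=
  pdv_comm hf _ _ x

lemma lap_add (hf : ContDiff ℝ (⊤ : ℕ∞) f) (hg : ContDiff ℝ (⊤ : ℕ∞) g) (x : E3) :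
    lap (fun y => f y + g y) x = lap f x + lap g x := by
  unfold lap
  rw [← Finset.sum_add_distrib]
  refine Finset.sum_congr rfl fun m _ => ?_
  have h1 : pd (fun y => f y + g y) m = fun y => pd f m y + pd g m y :=
    funext fun y => pd_add (hf.differentiable (by simp) y) (hg.differentiable (by simp) y)
  rw [h1, pd_add ((contDiff_pd hf m).differentiable (by simp) x) ((contDiff_pd hg m).differentiable (by simp) x)]

end spatial

section transfer

variable {G : ℝ × E3 → ℝ} {t : ℝ} {x : E3}

/-- spatial directional derivative on the product space -/
noncomputable def sd (j : Fin 3) (G : ℝ × E3 → ℝ) : ℝ × E3 → ℝ :=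
  pdv ((0 : ℝ), EuclideanSpace.single j 1) G

/-- time derivative on the product space -/
noncomputable def td (G : ℝ × E3 → ℝ) : ℝ × E3 → ℝ :=
  pdv ((1 : ℝ), (0 : E3)) G

lemma contDiff_sd (hG : ContDiff ℝ (⊤ : ℕ∞) G) (j : Fin 3) : ContDiff ℝ (⊤ : ℕ∞) (LANS.sd j G) := contDiff_pdv hG _

lemma contDiff_td (hG : ContDiff ℝ (⊤ : ℕ∞) G) : ContDiff ℝ (⊤ : ℕ∞) (LANS.td G) := contDiff_pdv hG _

lemma pd_slice (hG : DifferentiableAt ℝ G (t, x)) (j : Fin 3) :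
    pd (fun y => G (t, y)) j x = sd j G (t, x) := by
  have h : HasFDerivAt (fun y : E3 => (t, y)) (ContinuousLinearMap.inr ℝ ℝ E3) x :=
    hasFDerivAt_prodMk_right t x
  have h2 : HasFDerivAt (fun y => G (t, y))
      ((fderiv ℝ G (t, x)).comp (ContinuousLinearMap.inr ℝ ℝ E3)) x :=
    hG.hasFDerivAt.comp x h
  simp only [pd, sd, pdv, h2.fderiv]
  rfl

lemma deriv_slice (hG : DifferentiableAt ℝ G (t, x)) :
    deriv (fun s => G (s, x)) t = td G (t, x) := by
  have h : HasFDerivAt (fun s : ℝ => (s, x)) (ContinuousLinearMap.inl ℝ ℝ E3) t :=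
    hasFDerivAt_prodMk_left t x
  have h2 : HasDerivAt (fun s => G (s, x))
      (((fderiv ℝ G (t, x)).comp (ContinuousLinearMap.inl ℝ ℝ E3)) 1) t :=
    (hG.hasFDerivAt.comp t h).hasDerivAt
  simp only [td, pdv, h2.deriv]
  rfl

lemma diff_slice_t (hG : ContDiff ℝ (⊤ : ℕ∞) G) : Differentiable ℝ (fun s => G (s, x)) :=
  (hG.differentiable (by simp)).comp (differentiable_id.prodMk (differentiable_const x))

lemma diff_slice_x (hG : ContDiff ℝ (⊤ : ℕ∞) G) : Differentiable ℝ (fun y => G (t, y)) :=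
  (hG.differentiable (by simp)).comp ((differentiable_const t).prodMk differentiable_id)

lemma contDiff_slice_x (hG : ContDiff ℝ (⊤ : ℕ∞) G) : ContDiff ℝ (⊤ : ℕ∞) (fun y => G (t, y)) :=
  hG.comp (contDiff_const.prodMk contDiff_id)

lemma lap_slice (hG : ContDiff ℝ (⊤ : ℕ∞) G) (t : ℝ) (x : E3) :
    lap (fun y => G (t, y)) x = ∑ j, sd j (sd j G) (t, x) := by
  unfold lap
  refine Finset.sum_congr rfl fun m _ => ?_
  have h1 : pd (fun y => G (t, y)) m = fun y => sd m G (t, y) :=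
    funext fun y => pd_slice (hG.differentiable (by simp) _) m
  rw [h1, pd_slice ((contDiff_sd hG m).differentiable (by simp) _) m]

lemma time_lap (hG : ContDiff ℝ (⊤ : ℕ∞) G) (t : ℝ) (x : E3) :
    deriv (fun s => lap (fun y => G (s, y)) x) t
      = lap (fun y => deriv (fun s => G (s, y)) t) x := by
  have h1 : (fun s => lap (fun y => G (s, y)) x) = fun s => ∑ j, sd j (sd j G) (s, x) :=
    funext fun s => lap_slice hG s x
  have h2 : (fun y => deriv (fun s => G (s, y)) t) = fun y => td G (t, y) :=
    funext fun y => deriv_slice (hG.differentiable (by simp) _)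
  rw [h1, h2, lap_slice (contDiff_td hG) t x, deriv_fun_sum (fun j _ =>
    (diff_slice_t (contDiff_sd (contDiff_sd hG j) j) t))]
  refine Finset.sum_congr rfl fun m _ => ?_
  rw [deriv_slice ((contDiff_sd (contDiff_sd hG m) m).differentiable (by simp) _)]
  have hin : td (LANS.sd m G) = LANS.sd m (td G) :=
    funext fun q => pdv_comm hG _ _ q
  calc td (LANS.sd m (LANS.sd m G)) (t, x)
      = LANS.sd m (td (LANS.sd m G)) (t, x) := pdv_comm (contDiff_sd hG m) _ _ _
    _ = LANS.sd m (LANS.sd m (td G)) (t, x) := by rw [hin]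

end transfer

end LANS

open LANS

/-- Equivalence of the two forms of the LANS-α motion equation: for smooth divergence-free
`u`, with `v = (1 − α²Δ)u` and stress tensor
`τ_{ij} = u_{i,m} u_{j,m} + u_{i,m} u_{m,j} − u_{m,i} u_{m,j}`, one has pointwise
`(1−α²Δ)(∂_t u_i + u_j ∂_j u_i) + ∂_i p + α² ∂_j τ_{ij}
  = ∂_t v_i + u_j ∂_j v_i + v_j ∂_i u_j + ∂_i (p − ½|u|² − (α²/2)|∇u|²)`. -/
theorem stmt_13 (α : ℝ)
    (u : ℝ → EuclideanSpace ℝ (Fin 3) → Fin 3 → ℝ)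
    (p : EuclideanSpace ℝ (Fin 3) → ℝ)
    (hu : ∀ i, ContDiff ℝ (⊤ : ℕ∞) (fun q : ℝ × EuclideanSpace ℝ (Fin 3) => u q.1 q.2 i))
    (hp : ContDiff ℝ (⊤ : ℕ∞) p)
    (hdiv : ∀ t x, ∑ j, pd (fun y => u t y j) j x = 0)
    (v : ℝ → EuclideanSpace ℝ (Fin 3) → Fin 3 → ℝ)
    (hv : ∀ t x i, v t x i = u t x i - α ^ 2 * lap (fun y => u t y i) x)
    (τ : ℝ → EuclideanSpace ℝ (Fin 3) → Fin 3 → Fin 3 → ℝ)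
    (hτ : ∀ t x i j, τ t x i j =
      ∑ m, (pd (fun y => u t y i) m x * pd (fun y => u t y j) m x
        + pd (fun y => u t y i) m x * pd (fun y => u t y m) j x
        - pd (fun y => u t y m) i x * pd (fun y => u t y m) j x)) :
    ∀ t x i,
      (deriv (fun s => u s x i) t + ∑ j, u t x j * pd (fun y => u t y i) j x)
        - α ^ 2 * lap (fun y =>
            deriv (fun s => u s y i) t + ∑ j, u t y j * pd (fun z => u t z i) j y) x
        + pd p i x
        + α ^ 2 * ∑ j, pd (fun y => τ t y i j) j x
      = deriv (fun s => v s x i) t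
        + ∑ j, u t x j * pd (fun y => v t y i) j x
        + ∑ j, v t x j * pd (fun y => u t y j) i x
        + pd (fun y => p y - (1 / 2) * ∑ j, (u t y j) ^ 2
            - (α ^ 2 / 2) * ∑ j, ∑ m, (pd (fun z => u t z j) m y) ^ 2) i x := by
  intro t x i
  -- smoothness of the spatial slices
  have hg : ∀ m : Fin 3, ContDiff ℝ (⊤ : ℕ∞) (fun y => u t y m) := fun m =>
    contDiff_slice_x (hu m)
  have hgd : ∀ (m : Fin 3) y, DifferentiableAt ℝ (fun z => u t z m) y := fun m y =>
    (hg m).differentiable (by simp) y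
  have hg2 : ∀ (m a : Fin 3), ContDiff ℝ (⊤ : ℕ∞) (pd (fun y => u t y m) a) := fun m a =>
    contDiff_pd (hg m) a
  have hg2d : ∀ (m a : Fin 3) y, DifferentiableAt ℝ (pd (fun z => u t z m) a) y := fun m a y =>
    (hg2 m a).differentiable (by simp) y
  have hg3 : ∀ (m a b : Fin 3), ContDiff ℝ (⊤ : ℕ∞) (pd (pd (fun y => u t y m) a) b) := fun m a b =>
    contDiff_pd (hg2 m a) b
  have hg3d : ∀ (m a b : Fin 3) y, DifferentiableAt ℝ (pd (pd (fun z => u t z m) a) b) y :=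
    fun m a b y => (hg3 m a b).differentiable (by simp) y
  -- symmetry of second derivatives
  have hs2 : ∀ (a b c : Fin 3),
      pd (pd (fun y => u t y a) b) c x = pd (pd (fun y => u t y a) c) b x := fun a b c =>
    pd_comm (hg a) b c x
  have hs3 : ∀ (b m : Fin 3),
      pd (pd (pd (fun y => u t y i) b) m) m x = pd (pd (pd (fun y => u t y i) m) m) b x := by
    intro b m
    have e1 : pd (pd (fun y => u t y i) b) m = pd (pd (fun y => u t y i) m) b :=
      funext fun y => pd_comm (hg i) b m y
    rw [e1, pd_comm (hg2 i m) b m x]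
  -- divergence-free consequences
  have HSe : ∀ m : Fin 3,
      pd (pd (fun y => u t y 0) m) 0 x + pd (pd (fun y => u t y 1) m) 1 x
        + pd (pd (fun y => u t y 2) m) 2 x = 0 := by
    intro m
    have h0 : pd (fun y => ∑ j, pd (fun z => u t z j) j y) m x = 0 := by
      have e : (fun y => ∑ j, pd (fun z => u t z j) j y) = fun _ => (0 : ℝ) :=
        funext fun y => hdiv t y
      rw [e]
      simp [pd]
    rw [pd_sum _ (fun j _ => hg2d j j x)] at h0
    have h1 : ∀ j : Fin 3, pd (pd (fun z => u t z j) j) m x = pd (pd (fun z => u t z j) m) j x :=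
      fun j => pd_comm (hg j) j m x
    simp only [Fin.sum_univ_three, h1] at h0
    linarith
  -- time-derivative commutation
  have Htime : deriv (fun s => lap (fun y => u s y i) x) t
      = lap (fun y => deriv (fun s => u s y i) t) x := time_lap (hu i) t x
  have hdiffu : DifferentiableAt ℝ (fun s => u s x i) t := diff_slice_t (hu i) t
  have hdifflap : DifferentiableAt ℝ (fun s => lap (fun y => u s y i) x) t := by
    have e : (fun s => lap (fun y => u s y i) x)
        = fun s => ∑ j, sd j (sd j (fun q : ℝ × EuclideanSpace ℝ (Fin 3) => u q.1 q.2 i)) (s, x) :=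
      funext fun s => lap_slice (hu i) s x
    rw [e]
    exact DifferentiableAt.fun_sum fun j _ =>
      diff_slice_t (contDiff_sd (contDiff_sd (hu i) j) j) t
  -- HC : time derivative of v
  have HC : deriv (fun s => v s x i) t
      = deriv (fun s => u s x i) t
        - α ^ 2 * lap (fun y => deriv (fun s => u s y i) t) x := by
    have e : (fun s => v s x i) = fun s => u s x i - α ^ 2 * lap (fun y => u s y i) x :=
      funext fun s => hv s x i
    rw [e, deriv_fun_sub hdiffu (hdifflap.const_mul _), deriv_const_mul _ hdifflap, Htime]
  -- HD : spatial derivative of v component i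
  have HD : ∀ j : Fin 3, pd (fun y => v t y i) j x
      = pd (fun y => u t y i) j x
        - α ^ 2 * ∑ m, pd (pd (pd (fun y => u t y i) m) m) j x := by
    intro j
    have e : (fun y => v t y i)
        = fun y => u t y i - α ^ 2 * ∑ m, pd (pd (fun z => u t z i) m) m y :=
      funext fun y => hv t y i
    rw [e, pd_sub (hgd i x) (((DifferentiableAt.fun_sum fun m _ => hg3d i m m x)).const_mul _),
      pd_const_mul _ (DifferentiableAt.fun_sum fun m _ => hg3d i m m x),
      pd_sum _ (fun m _ => hg3d i m m x)]
  -- HE : v itself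
  have HE : ∀ j : Fin 3, v t x j
      = u t x j - α ^ 2 * ∑ m, pd (pd (fun y => u t y j) m) m x := fun j => hv t x j
  -- HB : divergence of the stress tensor
  have HB : ∀ j : Fin 3, pd (fun y => τ t y i j) j x
      = ∑ m, (pd (pd (fun y => u t y i) m) j x * pd (fun y => u t y j) m x
        + pd (fun y => u t y i) m x * pd (pd (fun y => u t y j) m) j x
        + pd (pd (fun y => u t y i) m) j x * pd (fun y => u t y m) j x
        + pd (fun y => u t y i) m x * pd (pd (fun y => u t y m) j) j x
        - pd (pd (fun y => u t y m) i) j x * pd (fun y => u t y m) j x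
        - pd (fun y => u t y m) i x * pd (pd (fun y => u t y m) j) j x) := by
    intro j
    have e : (fun y => τ t y i j) = fun y =>
        ∑ m, (pd (fun z => u t z i) m y * pd (fun z => u t z j) m y
          + pd (fun z => u t z i) m y * pd (fun z => u t z m) j y
          - pd (fun z => u t z m) i y * pd (fun z => u t z m) j y) :=
      funext fun y => hτ t y i j
    rw [e, pd_sum _ (fun m _ =>
      (((hg2d i m x).fun_mul (hg2d j m x)).fun_add ((hg2d i m x).fun_mul (hg2d m j x))).fun_sub
        ((hg2d m i x).fun_mul (hg2d m j x)))]
    refine Finset.sum_congr rfl fun m _ => ?_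
    rw [pd_sub (((hg2d i m x).fun_mul (hg2d j m x)).fun_add ((hg2d i m x).fun_mul (hg2d m j x)))
        ((hg2d m i x).fun_mul (hg2d m j x)),
      pd_add ((hg2d i m x).fun_mul (hg2d j m x)) ((hg2d i m x).fun_mul (hg2d m j x)),
      pd_mul (hg2d i m x) (hg2d j m x), pd_mul (hg2d i m x) (hg2d m j x),
      pd_mul (hg2d m i x) (hg2d m j x)]
    ring
  -- HA : Laplacian of the transport term
  have HA : lap (fun y =>
        deriv (fun s => u s y i) t + ∑ j, u t y j * pd (fun z => u t z i) j y) x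
      = lap (fun y => deriv (fun s => u s y i) t) x
        + ∑ m, ∑ j, (pd (pd (fun y => u t y j) m) m x * pd (fun y => u t y i) j x
          + pd (fun y => u t y j) m x * pd (pd (fun y => u t y i) j) m x
          + pd (fun y => u t y j) m x * pd (pd (fun y => u t y i) j) m x
          + u t x j * pd (pd (pd (fun y => u t y i) j) m) m x) := by
    have hts : ContDiff ℝ (⊤ : ℕ∞) (fun y => deriv (fun s => u s y i) t) := by
      have e : (fun y => deriv (fun s => u s y i) t)
          = fun y => td (fun q : ℝ × EuclideanSpace ℝ (Fin 3) => u q.1 q.2 i) (t, y) :=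
        funext fun y => deriv_slice ((hu i).differentiable (by simp) _)
      rw [e]
      exact contDiff_slice_x (contDiff_td (hu i))
    have hNs : ContDiff ℝ (⊤ : ℕ∞) (fun y => ∑ j, u t y j * pd (fun z => u t z i) j y) :=
      ContDiff.sum fun j _ => (hg j).mul (hg2 i j)
    have h1 := lap_add hts hNs x
    rw [h1]
    congr 1
    -- now expand lap N
    have eN : ∀ m : Fin 3, pd (fun y => ∑ j, u t y j * pd (fun z => u t z i) j y) m
        = fun y => ∑ j, (pd (fun z => u t z j) m y * pd (fun z => u t z i) j y
            + u t y j * pd (pd (fun z => u t z i) j) m y) := by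
      intro m
      funext y
      rw [pd_sum _ (fun j _ => (hgd j y).fun_mul (hg2d i j y))]
      exact Finset.sum_congr rfl fun j _ => pd_mul (hgd j y) (hg2d i j y)
    show ∑ m, pd (pd (fun y => ∑ j, u t y j * pd (fun z => u t z i) j y) m) m x = _
    refine Finset.sum_congr rfl fun m _ => ?_
    rw [eN m, pd_sum _ (fun j _ =>
      ((hg2d j m x).fun_mul (hg2d i j x)).fun_add ((hgd j x).fun_mul (hg3d i j m x)))]
    refine Finset.sum_congr rfl fun j _ => ?_
    rw [pd_add ((hg2d j m x).fun_mul (hg2d i j x)) ((hgd j x).fun_mul (hg3d i j m x)),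
      pd_mul (hg2d j m x) (hg2d i j x), pd_mul (hgd j x) (hg3d i j m x)]
    ring
  -- HP : the pressure gradient
  have HP : pd (fun y => p y - (1 / 2) * ∑ j, (u t y j) ^ 2
        - (α ^ 2 / 2) * ∑ j, ∑ m, (pd (fun z => u t z j) m y) ^ 2) i x
      = pd p i x - (1 / 2) * ∑ j, (2 * u t x j * pd (fun y => u t y j) i x)
        - (α ^ 2 / 2) * ∑ j, ∑ m,
            (2 * pd (fun y => u t y j) m x * pd (pd (fun y => u t y j) m) i x) := by
    have d1 : DifferentiableAt ℝ (fun y => ∑ j, (u t y j) ^ 2) x :=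
      DifferentiableAt.fun_sum fun j _ => (hgd j x).fun_pow 2
    have d2 : DifferentiableAt ℝ
        (fun y => ∑ j, ∑ m, (pd (fun z => u t z j) m y) ^ 2) x :=
      DifferentiableAt.fun_sum fun j _ => DifferentiableAt.fun_sum fun m _ => (hg2d j m x).fun_pow 2
    rw [pd_sub (((hp.differentiable (by simp)) x).fun_sub (d1.const_mul _)) (d2.const_mul _),
      pd_sub ((hp.differentiable (by simp)) x) (d1.const_mul _),
      pd_const_mul _ d1, pd_const_mul _ d2,
      pd_sum _ (fun j _ => (hgd j x).fun_pow 2),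
      pd_sum _ (fun j _ => DifferentiableAt.fun_sum fun m _ => (hg2d j m x).fun_pow 2)]
    have e2 : ∀ j : Fin 3, pd (fun y => ∑ m, (pd (fun z => u t z j) m y) ^ 2) i x
        = ∑ m, (2 * pd (fun y => u t y j) m x * pd (pd (fun y => u t y j) m) i x) := by
      intro j
      rw [pd_sum _ (fun m _ => (hg2d j m x).fun_pow 2)]
      exact Finset.sum_congr rfl fun m _ => pd_sq (hg2d j m x)
    rw [Finset.sum_congr rfl fun (j : Fin 3) _ => pd_sq (hgd j x),
      Finset.sum_congr rfl fun (j : Fin 3) _ => e2 j]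
  -- assemble
  rw [HA, HP]
  simp only [HB, HC, HD, HE]
  simp only [Fin.sum_univ_three]
  rw [hs2 i 1 0, hs2 i 2 0, hs2 i 2 1,
    hs2 0 i 0, hs2 0 i 1, hs2 0 i 2,
    hs2 1 i 0, hs2 1 i 1, hs2 1 i 2,
    hs2 2 i 0, hs2 2 i 1, hs2 2 i 2,
    hs3 0 1, hs3 0 2, hs3 1 0, hs3 1 2, hs3 2 0, hs3 2 1]
  linear_combination
    (α ^ 2 * pd (fun y => u t y i) 0 x) * HSe 0
    + (α ^ 2 * pd (fun y => u t y i) 1 x) * HSe 1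
    + (α ^ 2 * pd (fun y => u t y i) 2 x) * HSe 2
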